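/- arXiv:1810.00553 — 3 statements merged into one kernel-verified Lean document; each statement's English description precedes it below -/
import Mathlib

section
/- Let a_0, a_1, ..., a_t be real numbers, not all zero up to each prefix (interpret terms with zero denominator as zero). Then the sum over τ from 0 to t of a_τ² / ‖(a_0,...,a_τ)‖₂ is at most 2‖(a_0,...,a_t)‖₂. -/
/-!
With `S τ` the partial sums, `y - x = (√y - √x)(√y + √x) ≤ 2√y (√y - √x)` for `0 ≤ x ≤ y` gives
`a τ ² / √(S (τ+1)) ≤ 2 (√(S (τ+1)) - √(S τ))`, and the right-hand sides telescope.
-/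

open Finset

lemma sub_div_sqrt_le_two_mul_sqrt_sub {x y : ℝ} (hx : 0 ≤ x) (hxy : x ≤ y) :
    (y - x) / √y ≤ 2 * (√y - √x) := by
  rcases (hx.trans hxy).eq_or_lt with hy | hy
  · subst hy
    simp [le_antisymm hxy hx]
  have hsqrt_pos : 0 < √y := Real.sqrt_pos.2 hy
  have hsqrt_mono : √x ≤ √y := Real.sqrt_le_sqrt hxy
  have hdiff : y - x = (√y + √x) * (√y - √x) := by
    rw [← sq_sub_sq, Real.sq_sqrt (hx.trans hxy), Real.sq_sqrt hx]
  rw [div_le_iff₀ hsqrt_pos, hdiff]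
  nlinarith

lemma sum_div_sqrt_sum_range_le {b : ℕ → ℝ} (hb : ∀ i, 0 ≤ b i) (n : ℕ) :
    ∑ τ ∈ range n, b τ / √(∑ i ∈ range (τ + 1), b i) ≤ 2 * √(∑ i ∈ range n, b i) := by
  set S : ℕ → ℝ := fun m ↦ ∑ i ∈ range m, b i with hS
  have hS_nonneg (m : ℕ) : 0 ≤ S m := sum_nonneg fun i _ ↦ hb i
  calc ∑ τ ∈ range n, b τ / √(S (τ + 1))
      = ∑ τ ∈ range n, (S (τ + 1) - S τ) / √(S (τ + 1)) := by
        simp only [hS, sum_range_succ_sub_sum]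
    _ ≤ ∑ τ ∈ range n, 2 * (√(S (τ + 1)) - √(S τ)) := by
        gcongr with τ
        exact sub_div_sqrt_le_two_mul_sqrt_sub (hS_nonneg τ)
          (sum_le_sum_of_subset_of_nonneg (range_subset_range.2 τ.le_succ) fun i _ _ ↦ hb i)
    _ = 2 * √(S n) := by
        rw [← mul_sum, sum_range_sub (fun m ↦ √(S m))]
        simp [hS]

/-- Prefix-sum lemma (Lemma 10 of Duchi et al.): summands with zero
denominator are 0 by Lean's convention `x / 0 = 0`. -/
theorem prefix_sum_sqrt_bound (t : ℕ) (a : ℕ → ℝ) :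
    ∑ τ ∈ Finset.range (t + 1),
        a τ ^ 2 / Real.sqrt (∑ i ∈ Finset.range (τ + 1), a i ^ 2)
      ≤ 2 * Real.sqrt (∑ i ∈ Finset.range (t + 1), a i ^ 2) :=
  sum_div_sqrt_sum_range_le (fun i ↦ sq_nonneg (a i)) (t + 1)
end

section
/- Let ρ ∈ (0,1) and let (δ_k) and h_k be as in the exponential moving average scheme: ṽ_0 = δ_0², ṽ_k = ρṽ_{k−1} + (1−ρ)δ_k², v_k = max(ṽ_k, v_{k−1}), h_k = sqrt((k+1)v_k). If δ_k ≠ 0 for all k, then ∑_{k=0}^{K} (k+1)·δ_k²/h_k ≤ sqrt(K+1)/(1−ρ) · ∑_{k=0}^{K} |δ_k|. -/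
/-! The exponential moving average satisfies `ṽ_k ≥ (1 - ρ) δ_k²`, and the running maximum only
increases it, so `h_k ≥ √((k + 1)(1 - ρ)) |δ_k|`. Hence each summand is at most
`√(k + 1) |δ_k| / √(1 - ρ) ≤ √(K + 1) |δ_k| / (1 - ρ)`, using `1 - ρ ≤ √(1 - ρ)`. -/

section MovingAverage

variable {ρ : ℝ} {δ vt : ℕ → ℝ}

lemma ema_nonneg (hρ0 : 0 ≤ ρ) (hρ1 : ρ ≤ 1) (hvt0 : vt 0 = δ 0 ^ 2)
    (hvt : ∀ k ≥ 1, vt k = ρ * vt (k - 1) + (1 - ρ) * δ k ^ 2) (k : ℕ) : 0 ≤ vt k := by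
  induction k with
  | zero => rw [hvt0]; positivity
  | succ n ih =>
    rw [hvt (n + 1) n.succ_pos, Nat.add_sub_cancel]
    have : 0 ≤ 1 - ρ := by linarith
    positivity

lemma one_sub_mul_sq_le_ema (hρ0 : 0 ≤ ρ) (hρ1 : ρ ≤ 1) (hvt0 : vt 0 = δ 0 ^ 2)
    (hvt : ∀ k ≥ 1, vt k = ρ * vt (k - 1) + (1 - ρ) * δ k ^ 2) (k : ℕ) :
    (1 - ρ) * δ k ^ 2 ≤ vt k := by
  cases k with
  | zero => rw [hvt0]; nlinarith [sq_nonneg (δ 0)]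
  | succ n =>
    rw [hvt (n + 1) n.succ_pos, Nat.add_sub_cancel]
    have := mul_nonneg hρ0 (ema_nonneg hρ0 hρ1 hvt0 hvt n)
    linarith

end MovingAverage

lemma le_running_max {α : Type*} [LinearOrder α] {a : α} {vt v : ℕ → α}
    (hv0 : v 0 = max (vt 0) a) (hv : ∀ k ≥ 1, v k = max (vt k) (v (k - 1))) (k : ℕ) :
    vt k ≤ v k := by
  cases k with
  | zero => exact hv0 ▸ le_max_left _ _
  | succ n => exact hv (n + 1) n.succ_pos ▸ le_max_left _ _

lemma mul_sq_div_sqrt_mul_le {n c d v : ℝ} (hn : 0 < n) (hc : 0 < c) (hv : c * d ^ 2 ≤ v) :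
    n * d ^ 2 / √(n * v) ≤ √n / √c * |d| := by
  rcases eq_or_ne d 0 with rfl | hd
  · simp
  have hden : √n * √c * |d| ≤ √(n * v) := by
    calc √n * √c * |d| = √(n * (c * d ^ 2)) := by
          rw [Real.sqrt_mul hn.le, Real.sqrt_mul hc.le, Real.sqrt_sq_eq_abs, mul_assoc]
      _ ≤ √(n * v) := by gcongr
  calc n * d ^ 2 / √(n * v) ≤ n * d ^ 2 / (√n * √c * |d|) :=
        div_le_div_of_nonneg_left (by positivity) (by positivity) hden
    _ = √n / √c * |d| := by
        rw [← sq_abs d]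
        nth_rewrite 1 [← Real.sq_sqrt hn.le]
        field_simp

theorem a2grad_exp_sum_bound_general (ρ : ℝ) (hρ0 : 0 < ρ) (hρ1 : ρ < 1)
    (K : ℕ) (δ vt v h : ℕ → ℝ)
    (hvt0 : vt 0 = δ 0 ^ 2)
    (hvt : ∀ k ≥ 1, vt k = ρ * vt (k - 1) + (1 - ρ) * δ k ^ 2)
    (hv0 : v 0 = max (vt 0) 0)
    (hv : ∀ k ≥ 1, v k = max (vt k) (v (k - 1)))
    (hh : ∀ k, h k = Real.sqrt (((k : ℝ) + 1) * v k)) :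
    ∑ k ∈ Finset.range (K + 1), ((k : ℝ) + 1) * δ k ^ 2 / h k
      ≤ Real.sqrt ((K : ℝ) + 1) / (1 - ρ) *
        ∑ k ∈ Finset.range (K + 1), |δ k| := by
  have hc : 0 < 1 - ρ := by linarith
  rw [Finset.mul_sum]
  refine Finset.sum_le_sum fun k hk => ?_
  have hkK : (k : ℝ) + 1 ≤ K + 1 := by
    gcongr; exact_mod_cast Finset.mem_range_succ_iff.mp hk
  have hvk : (1 - ρ) * δ k ^ 2 ≤ v k :=
    (one_sub_mul_sq_le_ema hρ0.le hρ1.le hvt0 hvt k).trans (le_running_max hv0 hv k)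
  calc ((k : ℝ) + 1) * δ k ^ 2 / h k ≤ √((k : ℝ) + 1) / √(1 - ρ) * |δ k| :=
        hh k ▸ mul_sq_div_sqrt_mul_le (by positivity) hc hvk
    _ ≤ √((K : ℝ) + 1) / (1 - ρ) * |δ k| := by
        gcongr
        exact Real.le_sqrt_self_iff.mpr (by linarith)

/-- Adaptive-term bound for the exponential moving average scheme of
A2Grad-exp. -/
theorem a2grad_exp_sum_bound (ρ : ℝ) (hρ0 : 0 < ρ) (hρ1 : ρ < 1)
    (K : ℕ) (δ vt v h : ℕ → ℝ)
    (hδ : ∀ k, δ k ≠ 0)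
    (hvt0 : vt 0 = δ 0 ^ 2)
    (hvt : ∀ k ≥ 1, vt k = ρ * vt (k - 1) + (1 - ρ) * δ k ^ 2)
    (hv0 : v 0 = max (vt 0) 0)
    (hv : ∀ k ≥ 1, v k = max (vt k) (v (k - 1)))
    (hh : ∀ k, h k = Real.sqrt (((k : ℝ) + 1) * v k)) :
    ∑ k ∈ Finset.range (K + 1), ((k : ℝ) + 1) * δ k ^ 2 / h k
      ≤ Real.sqrt ((K : ℝ) + 1) / (1 - ρ) *
        ∑ k ∈ Finset.range (K + 1), |δ k| :=
  a2grad_exp_sum_bound_general ρ hρ0 hρ1 K δ vt v h hvt0 hvt hv0 hv hh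
end

section
/- Let ψ and φ be differentiable convex functions on a closed convex set X ⊆ ℝ^d with Bregman divergences D_ψ and D_φ, let α, β > 0, g ∈ ℝ^d, y₁, y₂ ∈ X, and let z be a minimizer over X of F(x) = ⟨g, x⟩ + α·D_φ(y₁, x) + β·D_ψ(y₂, x). Then for all x ∈ X: ⟨g, z⟩ + α·D_φ(y₁, z) + β·D_ψ(y₂, z) ≤ ⟨g, x⟩ + α·D_φ(y₁, x) + β·D_ψ(y₂, x) − α·D_φ(z, x) − β·D_ψ(z, x). -/
/-!
Since `z` minimizes `F` over the convex set `X`, first-order optimality gives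
`⟪∇F z, x - z⟫ ≥ 0`, where `∇F z = g + α (∇φ z - ∇φ y₁) + β (∇ψ z - ∇ψ y₂)`. The three-point identity
`D_h(y, x) = D_h(y, z) + D_h(z, x) + ⟪∇h z - ∇h y, x - z⟫` rewrites this inequality as the claim.
-/

open RealInnerProductSpace

section Bregman

variable {E : Type*} [NormedAddCommGroup E] [InnerProductSpace ℝ E]

def bregmanDiv (f : E → ℝ) (f' : E → E) (y x : E) : ℝ :=
  f x - f y - ⟪f' y, x - y⟫

theorem bregmanDiv_eq_add_add_inner (f : E → ℝ) (f' : E → E) (x y z : E) :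
    bregmanDiv f f' y x = bregmanDiv f f' y z + bregmanDiv f f' z x + ⟪f' z - f' y, x - z⟫ := by
  simp only [bregmanDiv, inner_sub_left, inner_sub_right]
  ring

theorem HasGradientAt.hasFDerivAt_bregmanDiv [CompleteSpace E] {f : E → ℝ} {f' : E → E} {x : E}
    (hf : HasGradientAt f (f' x) x) (y : E) :
    HasFDerivAt (bregmanDiv f f' y) (innerSL ℝ (f' x - f' y)) x := by
  have h := (hf.hasFDerivAt.sub_const (f y)).sub
    (((innerSL ℝ (f' y)).hasFDerivAt (x := x)).sub_const ⟪f' y, y⟫)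
  have hD : bregmanDiv f f' y = fun w => f w - f y - (innerSL ℝ (f' y) w - ⟪f' y, y⟫) := by
    funext w
    simp only [bregmanDiv, innerSL_apply_apply, inner_sub_right]
  rw [hD, map_sub]
  exact h

end Bregman

theorem IsMinOn.fderiv_sub_nonneg {E : Type*} [NormedAddCommGroup E] [NormedSpace ℝ E]
    {F : E → ℝ} {F' : E →L[ℝ] ℝ} {X : Set E} {x z : E} (hmin : IsMinOn F X z)
    (hX : Convex ℝ X) (hF : HasFDerivAt F F' z) (hz : z ∈ X) (hx : x ∈ X) :
    0 ≤ F' (x - z) :=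
  hmin.localize.hasFDerivWithinAt_nonneg hF.hasFDerivWithinAt
    (sub_mem_posTangentConeAt_of_segment_subset (hX.segment_subset hz hx))

theorem three_point_lemma_general {d : ℕ}
    (X : Set (EuclideanSpace ℝ (Fin d))) (hXconv : Convex ℝ X)
    (ψ φ : EuclideanSpace ℝ (Fin d) → ℝ)
    (gψ gφ : EuclideanSpace ℝ (Fin d) → EuclideanSpace ℝ (Fin d))
    (hψgrad : ∀ x, HasGradientAt ψ (gψ x) x)
    (hφgrad : ∀ x, HasGradientAt φ (gφ x) x)
    (Dψ Dφ : EuclideanSpace ℝ (Fin d) → EuclideanSpace ℝ (Fin d) → ℝ)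
    (hDψ : ∀ y x, Dψ y x = ψ x - ψ y - ⟪gψ y, x - y⟫)
    (hDφ : ∀ y x, Dφ y x = φ x - φ y - ⟪gφ y, x - y⟫)
    (α β : ℝ)
    (g y₁ y₂ z : EuclideanSpace ℝ (Fin d))
    (hz : z ∈ X)
    (hmin : ∀ x ∈ X,
      ⟪g, z⟫ + α * Dφ y₁ z + β * Dψ y₂ z ≤ ⟪g, x⟫ + α * Dφ y₁ x + β * Dψ y₂ x) :
    ∀ x ∈ X,
      ⟪g, z⟫ + α * Dφ y₁ z + β * Dψ y₂ z
        ≤ ⟪g, x⟫ + α * Dφ y₁ x + β * Dψ y₂ x - α * Dφ z x - β * Dψ z x := by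
  obtain rfl : Dψ = bregmanDiv ψ gψ := funext₂ hDψ
  obtain rfl : Dφ = bregmanDiv φ gφ := funext₂ hDφ
  intro x hx
  have hF := ((innerSL ℝ g).hasFDerivAt.add
    (((hφgrad z).hasFDerivAt_bregmanDiv y₁).const_mul α)).add
    (((hψgrad z).hasFDerivAt_bregmanDiv y₂).const_mul β)
  have hoptimal := IsMinOn.fderiv_sub_nonneg
    (F := fun w => ⟪g, w⟫ + α * bregmanDiv φ gφ y₁ w + β * bregmanDiv ψ gψ y₂ w) hmin hXconv hF hz hx
  simp only [add_apply, smul_apply, innerSL_apply_apply, smul_eq_mul] at hoptimal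
  rw [bregmanDiv_eq_add_add_inner φ gφ x y₁ z, bregmanDiv_eq_add_add_inner ψ gψ x y₂ z]
  linarith [inner_sub_right (𝕜 := ℝ) g x z]

/-- Three-point lemma for a mirror-descent step with two Bregman terms. -/
theorem three_point_lemma {d : ℕ}
    (X : Set (EuclideanSpace ℝ (Fin d))) (hXc : IsClosed X) (hXconv : Convex ℝ X)
    (ψ φ : EuclideanSpace ℝ (Fin d) → ℝ)
    (gψ gφ : EuclideanSpace ℝ (Fin d) → EuclideanSpace ℝ (Fin d))
    (hψconv : ConvexOn ℝ X ψ) (hφconv : ConvexOn ℝ X φ)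
    (hψgrad : ∀ x, HasGradientAt ψ (gψ x) x)
    (hφgrad : ∀ x, HasGradientAt φ (gφ x) x)
    (Dψ Dφ : EuclideanSpace ℝ (Fin d) → EuclideanSpace ℝ (Fin d) → ℝ)
    (hDψ : ∀ y x, Dψ y x = ψ x - ψ y - ⟪gψ y, x - y⟫)
    (hDφ : ∀ y x, Dφ y x = φ x - φ y - ⟪gφ y, x - y⟫)
    (α β : ℝ) (hα : 0 < α) (hβ : 0 < β)
    (g y₁ y₂ z : EuclideanSpace ℝ (Fin d))
    (hy₁ : y₁ ∈ X) (hy₂ : y₂ ∈ X) (hz : z ∈ X)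
    (hmin : ∀ x ∈ X,
      ⟪g, z⟫ + α * Dφ y₁ z + β * Dψ y₂ z ≤ ⟪g, x⟫ + α * Dφ y₁ x + β * Dψ y₂ x) :
    ∀ x ∈ X,
      ⟪g, z⟫ + α * Dφ y₁ z + β * Dψ y₂ z
        ≤ ⟪g, x⟫ + α * Dφ y₁ x + β * Dψ y₂ x - α * Dφ z x - β * Dψ z x :=
  three_point_lemma_general X hXconv ψ φ gψ gφ hψgrad hφgrad Dψ Dφ hDψ hDφ α β g y₁ y₂ z hz hmin
end
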